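/- If $q_k$ denotes the product of the first $k$ primes and $q_k + j$ with $0 \leq j \leq q_k - 1$ satisfies $\omega(q_k + j) = k$, then $q_k + j$ is squarefree, and hence $q_k + j = q_k$ (i.e., $j = 0$) when additionally $q_k + j$ is divisible by $q_k$. -/

import Mathlib

/-!
The radical of a number with `k` distinct prime factors is at least `q_k`, because its
`i`-th smallest prime factor is at least `p_i`. A number that is not squarefree is a proper
multiple of its radical, hence at least `2 q_k > q_k + j`.
-/

noncomputable def primorialN (k : ℕ) : ℕ := ∏ i ∈ Finset.range k, Nat.nth Nat.Prime i

open Finset UniqueFactorizationMonoid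

lemma one_le_primorialN (k : ℕ) : 1 ≤ primorialN k :=
  one_le_prod' fun i _ => (Nat.prime_nth_prime i).one_lt.le

lemma nth_prime_card_le {S : Finset ℕ} (hS : ∀ q ∈ S, q.Prime) {p : ℕ} (hp : p.Prime)
    (hlt : ∀ q ∈ S, q < p) : Nat.nth Nat.Prime #S ≤ p := by
  have hcard : #S ≤ Nat.count Nat.Prime p := by
    rw [Nat.count_eq_card_filter_range]
    exact card_le_card fun q hq => mem_filter.mpr ⟨mem_range.mpr (hlt q hq), hS q hq⟩
  calc Nat.nth Nat.Prime #S ≤ Nat.nth Nat.Prime (Nat.count Nat.Prime p) :=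
        Nat.nth_monotone Nat.infinite_setOfPred_prime hcard
    _ = p := Nat.nth_count hp

lemma primorialN_card_le_prod {S : Finset ℕ} (hS : ∀ p ∈ S, p.Prime) :
    primorialN #S ≤ ∏ p ∈ S, p := by
  induction S using Finset.induction_on_max with
  | empty => simp [primorialN]
  | insert p S hlt ih =>
    have hpS : p ∉ S := fun h => (hlt p h).false
    have hp := hS p (mem_insert_self p S)
    have hS' : ∀ q ∈ S, q.Prime := fun q hq => hS q (mem_insert_of_mem hq)
    calc primorialN #(insert p S) = primorialN #S * Nat.nth Nat.Prime #S := by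
          rw [card_insert_of_notMem hpS, primorialN, prod_range_succ, primorialN]
      _ ≤ (∏ q ∈ S, q) * p := Nat.mul_le_mul (ih hS') (nth_prime_card_le hS' hp hlt)
      _ = ∏ q ∈ insert p S, q := by rw [prod_insert hpS, mul_comm]

lemma primorialN_card_primeFactors_le_radical (n : ℕ) :
    primorialN #n.primeFactors ≤ radical n := by
  rw [Nat.radical_eq_prod_primeFactors]
  exact primorialN_card_le_prod fun _ => Nat.prime_of_mem_primeFactors

lemma squarefree_of_lt_two_mul_primorialN {n : ℕ} (hn : n ≠ 0)
    (h : n < 2 * primorialN #n.primeFactors) : Squarefree n := by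
  have hrad : n = radical n := Nat.eq_of_dvd_of_lt_two_mul hn radical_dvd_self
    (h.trans_le (Nat.mul_le_mul_left 2 (primorialN_card_primeFactors_le_radical n)))
  exact hrad ▸ squarefree_radical

/-- If `0 ≤ j ≤ q_k - 1` and `ω(q_k + j) = k`, then `q_k + j` is squarefree; hence if
additionally `q_k ∣ q_k + j`, then `j = 0`. -/
theorem stmt_4 (k j : ℕ) (hj : j ≤ primorialN k - 1)
    (hω : (primorialN k + j).primeFactors.card = k) :
    Squarefree (primorialN k + j) ∧ (primorialN k ∣ primorialN k + j → j = 0) := by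
  have hq := one_le_primorialN k
  refine ⟨squarefree_of_lt_two_mul_primorialN (by omega) (by rw [hω]; omega), fun hdvd => ?_⟩
  exact Nat.eq_zero_of_dvd_of_lt ((Nat.dvd_add_right dvd_rfl).mp hdvd) (by omega)
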